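/- arXiv:1402.4094 — 4 statements merged into one kernel-verified Lean document; each statement's English description precedes it below -/
import Mathlib

section
/- Let H be a complex Hilbert space and let D be a closed, densely defined, symmetric unbounded operator on H. Suppose there exist bounded linear operators Q and R on H such that for every x ∈ H one has Q x ∈ dom D and D(Q x) = x − R x, and such that the ranges of the (Hilbert-space) adjoints Q* and R* are contained in dom D. Then D is self-adjoint, i.e. D equals its adjoint D* with equal domains. -/
/-!
Let `y ∈ dom D*`. Pairing `y` with `D (Q x) = x - R x` gives `⟪x, y⟫ = ⟪x, R* y + Q* (D* y)⟫`
for every `x`, so `y = R* y + Q* (D* y)` lies in `dom D`. Hence `dom D* ⊆ dom D`, and a symmetric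
operator whose adjoint has no larger domain is self-adjoint.
-/

namespace LinearPMap

variable {𝕜 E F : Type*} [RCLike 𝕜]
  [NormedAddCommGroup E] [InnerProductSpace 𝕜 E] [CompleteSpace E]
  [NormedAddCommGroup F] [InnerProductSpace 𝕜 F] [CompleteSpace F]

theorem adjoint_apply_eq_add_of_parametrix {T : E →ₗ.[𝕜] F} (hT : Dense (T.domain : Set E))
    (Q : F →L[𝕜] E) (R : F →L[𝕜] F) (hQ : ∀ x : F, ∃ hx : Q x ∈ T.domain, T ⟨Q x, hx⟩ = x - R x)
    (y : T†.domain) :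
    (y : F) = ContinuousLinearMap.adjoint R y + ContinuousLinearMap.adjoint Q (T† y) := by
  refine ext_inner_left 𝕜 fun x => ?_
  obtain ⟨hx, hTQx⟩ := hQ x
  have hQx : inner 𝕜 (Q x) (T† y) = inner 𝕜 (x - R x) (y : F) := by
    rw [← inner_conj_symm, adjoint_isFormalAdjoint hT y ⟨Q x, hx⟩, hTQx, inner_conj_symm]
  rw [inner_add_right, ContinuousLinearMap.adjoint_inner_right,
    ContinuousLinearMap.adjoint_inner_right, hQx, inner_sub_left]
  ring

theorem adjoint_domain_le_of_parametrix {T : E →ₗ.[𝕜] E} (hT : Dense (T.domain : Set E))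
    (Q R : E →L[𝕜] E) (hQ : ∀ x : E, ∃ hx : Q x ∈ T.domain, T ⟨Q x, hx⟩ = x - R x)
    (hQadj : ∀ x : E, ContinuousLinearMap.adjoint Q x ∈ T.domain)
    (hRadj : ∀ x : E, ContinuousLinearMap.adjoint R x ∈ T.domain) :
    T†.domain ≤ T.domain := fun y hy => by
  rw [show y = _ from adjoint_apply_eq_add_of_parametrix hT Q R hQ ⟨y, hy⟩]
  exact T.domain.add_mem (hRadj y) (hQadj _)

theorem IsFormalAdjoint.adjoint_eq_self {T : E →ₗ.[𝕜] E} (hT : Dense (T.domain : Set E))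
    (hsymm : T.IsFormalAdjoint T) (hdom : T†.domain ≤ T.domain) : T† = T :=
  have hle : T ≤ T† := hsymm.le_adjoint hT
  (eq_of_le_of_domain_eq hle (le_antisymm hle.1 hdom)).symm

end LinearPMap

theorem selfAdjoint_of_parametrix_general
    {H : Type*} [NormedAddCommGroup H] [InnerProductSpace ℂ H] [CompleteSpace H]
    (D : H →ₗ.[ℂ] H)
    (hdense : Dense (D.domain : Set H))
    (hsymm : ∀ x y : D.domain,
      @inner ℂ _ _ (D x) (y : H) = @inner ℂ _ _ ((x : H)) (D y))
    (Q R : H →L[ℂ] H)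
    (hQ : ∀ x : H, ∃ hx : Q x ∈ D.domain, D ⟨Q x, hx⟩ = x - R x)
    (hQadj : ∀ x : H, (ContinuousLinearMap.adjoint Q) x ∈ D.domain)
    (hRadj : ∀ x : H, (ContinuousLinearMap.adjoint R) x ∈ D.domain) :
    D.adjoint = D :=
  LinearPMap.IsFormalAdjoint.adjoint_eq_self hdense hsymm
    (D.adjoint_domain_le_of_parametrix hdense Q R hQ hQadj hRadj)

/-- Abstract parametrix argument for self-adjointness: if `D` is a closed, densely
defined, symmetric unbounded operator on a complex Hilbert space and there are
bounded operators `Q`, `R` with `D (Q x) = x - R x` for all `x`, and the ranges of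
the adjoints `Q*` and `R*` are contained in the domain of `D`, then `D` is
self-adjoint, i.e. `D† = D`. -/
theorem selfAdjoint_of_parametrix
    {H : Type*} [NormedAddCommGroup H] [InnerProductSpace ℂ H] [CompleteSpace H]
    (D : H →ₗ.[ℂ] H)
    (hdense : Dense (D.domain : Set H))
    (hclosed : D.IsClosed)
    (hsymm : ∀ x y : D.domain,
      @inner ℂ _ _ (D x) (y : H) = @inner ℂ _ _ ((x : H)) (D y))
    (Q R : H →L[ℂ] H)
    (hQ : ∀ x : H, ∃ hx : Q x ∈ D.domain, D ⟨Q x, hx⟩ = x - R x)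
    (hQadj : ∀ x : H, (ContinuousLinearMap.adjoint Q) x ∈ D.domain)
    (hRadj : ∀ x : H, (ContinuousLinearMap.adjoint R) x ∈ D.domain) :
    D.adjoint = D :=
  selfAdjoint_of_parametrix_general D hdense hsymm Q R hQ hQadj hRadj
end

section
/- Let H be a complex Hilbert space and let D be a closed, densely defined unbounded operator on H. Let V ⊆ dom D be a core for D, i.e. the closure of the restriction of D to V equals D (equivalently: for every x ∈ dom D there is a sequence v_n ∈ V with v_n → x and D v_n → D x). Let Q and T be bounded linear operators on H whose ranges are contained in dom D and such that Q(D v) = v − T v for every v ∈ V. Then dom D = range(Q) + range(T), i.e. every element of dom D is a sum of an element of the range of Q and an element of the range of T, and conversely every such sum lies in dom D. -/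
/-!
On the core the parametrix identity reads `Q (D v) + T v = v`. Both sides depend continuously on
the pair `(v, D v)`, so the identity passes to limits along the graph of `D`, and the core
hypothesis makes every `x ∈ dom D` such a limit: `x = Q (D x) + T x`. The reverse inclusion holds
because `Q` and `T` take values in `dom D`.
-/

open Filter Topology

theorem LinearPMap.apply_add_apply_eq_of_tendsto {R E F ι : Type*} [Ring R]
    [AddCommGroup E] [Module R E] [TopologicalSpace E] [T2Space E] [ContinuousAdd E]
    [AddCommGroup F] [Module R F] [TopologicalSpace F]
    {l : Filter ι} [l.NeBot] (D : E →ₗ.[R] F) {Q : F → E} {T : E → E}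
    (hQ : Continuous Q) (hT : Continuous T) {u : ι → D.domain} {x : D.domain}
    (hu : Tendsto (fun i => (u i : E)) l (𝓝 x)) (hDu : Tendsto (fun i => D (u i)) l (𝓝 (D x)))
    (hpar : ∀ i, Q (D (u i)) + T (u i) = u i) :
    Q (D x) + T x = x := by
  have hlim : Tendsto (fun i => Q (D (u i)) + T (u i)) l (𝓝 (Q (D x) + T x)) :=
    ((hQ.tendsto _).comp hDu).add ((hT.tendsto _).comp hu)
  exact tendsto_nhds_unique (hlim.congr hpar) hu

theorem domain_eq_range_add_range_of_parametrix_general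
    {H : Type*} [NormedAddCommGroup H] [InnerProductSpace ℂ H]
    (D : H →ₗ.[ℂ] H)
    (V : Submodule ℂ H) (hV : V ≤ D.domain)
    (hcore : ∀ x : D.domain, ∃ v : ℕ → V,
      Tendsto (fun n => ((v n : H))) atTop (𝓝 (x : H)) ∧
      Tendsto (fun n => D ⟨(v n : H), hV (v n).2⟩) atTop (𝓝 (D x)))
    (Q T : H →L[ℂ] H)
    (hQ : ∀ x : H, Q x ∈ D.domain) (hT : ∀ x : H, T x ∈ D.domain)
    (hpar : ∀ v (hv : v ∈ V), Q (D ⟨v, hV hv⟩) = v - T v) :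
    (D.domain : Set H) = {x : H | ∃ a b : H, x = Q a + T b} := by
  ext x
  constructor
  · intro hx
    obtain ⟨v, hv, hDv⟩ := hcore ⟨x, hx⟩
    refine ⟨D ⟨x, hx⟩, x, ?_⟩
    refine (D.apply_add_apply_eq_of_tendsto Q.continuous T.continuous hv hDv fun n => ?_).symm
    rw [hpar _ (v n).2, sub_add_cancel]
  · rintro ⟨a, b, rfl⟩
    exact D.domain.add_mem (hQ a) (hT b)

/-- Abstract form of step (ii) of the parametrix argument: if `V` is a core for the
closed, densely defined operator `D`, the bounded operators `Q`, `T` have ranges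
contained in `dom D`, and `Q (D v) = v - T v` for all `v ∈ V`, then
`dom D = range Q + range T`. -/
theorem domain_eq_range_add_range_of_parametrix
    {H : Type*} [NormedAddCommGroup H] [InnerProductSpace ℂ H] [CompleteSpace H]
    (D : H →ₗ.[ℂ] H)
    (hdense : Dense (D.domain : Set H))
    (hclosed : D.IsClosed)
    (V : Submodule ℂ H) (hV : V ≤ D.domain)
    (hcore : ∀ x : D.domain, ∃ v : ℕ → V,
      Tendsto (fun n => ((v n : H))) atTop (𝓝 (x : H)) ∧
      Tendsto (fun n => D ⟨(v n : H), hV (v n).2⟩) atTop (𝓝 (D x)))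
    (Q T : H →L[ℂ] H)
    (hQ : ∀ x : H, Q x ∈ D.domain) (hT : ∀ x : H, T x ∈ D.domain)
    (hpar : ∀ v (hv : v ∈ V), Q (D ⟨v, hV hv⟩) = v - T v) :
    (D.domain : Set H) = {x : H | ∃ a b : H, x = Q a + T b} :=
  domain_eq_range_add_range_of_parametrix_general D V hV hcore Q T hQ hT hpar
end

section
/- Let g : ℝ → ℝ be the function g(x) = (1 + x²)^(−1/2). Then g belongs to L²(ℝ) (with respect to Lebesgue measure), and for every integer k ≥ 1 and every integer l with 0 ≤ l < k, the function x ↦ x^l · g^{(k)}(x) (where g^{(k)} denotes the k-th derivative of g) belongs to L²(ℝ). -/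
open MeasureTheory Polynomial

/-!
By induction, `(d/dx)ᵏ (1 + x²)ᵃ = pₖ(x) (1 + x²)^(a - k)` with `deg pₖ ≤ k`. Hence
`xˡ g⁽ᵏ⁾(x)` is a polynomial of degree `≤ l + k ≤ 2k - 1` times `(1 + x²)^(-1/2 - k)`, so it is
`O((1 + x²)⁻¹)`, and `(1 + x²)ˢ` is square integrable on `ℝ` as soon as `s < -1/4`.
-/

lemma abs_pow_le_one_add_sq_rpow {i n : ℕ} (hin : i ≤ n) (x : ℝ) :
    |x| ^ i ≤ (1 + x ^ 2) ^ ((n : ℝ) / 2) := by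
  have hx : |x| ≤ √(1 + x ^ 2) := Real.abs_le_sqrt (by linarith)
  have h1 : 1 ≤ √(1 + x ^ 2) := Real.one_le_sqrt.mpr (by nlinarith)
  calc |x| ^ i ≤ √(1 + x ^ 2) ^ i := by gcongr
    _ ≤ √(1 + x ^ 2) ^ n := pow_le_pow_right₀ h1 hin
    _ = (1 + x ^ 2) ^ ((n : ℝ) / 2) := by
      rw [Real.sqrt_eq_rpow, ← Real.rpow_natCast, ← Real.rpow_mul (by positivity)]
      ring_nf

lemma Polynomial.abs_eval_le_one_add_sq_rpow (p : ℝ[X]) {n : ℕ} (hp : p.natDegree ≤ n)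
    (x : ℝ) :
    |p.eval x| ≤ (∑ i ∈ Finset.range (n + 1), |p.coeff i|) * (1 + x ^ 2) ^ ((n : ℝ) / 2) := by
  rw [eval_eq_sum_range' (Nat.lt_succ_of_le hp), Finset.sum_mul]
  refine (Finset.abs_sum_le_sum_abs _ _).trans (Finset.sum_le_sum fun i hi => ?_)
  rw [abs_mul, abs_pow]
  exact mul_le_mul_of_nonneg_left
    (abs_pow_le_one_add_sq_rpow (Nat.le_of_lt_succ (Finset.mem_range.mp hi)) x) (abs_nonneg _)

lemma continuous_one_add_sq_rpow (s : ℝ) : Continuous fun x : ℝ => (1 + x ^ 2) ^ s :=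
  (by fun_prop : Continuous fun x : ℝ => 1 + x ^ 2).rpow_const fun _ => Or.inl (by positivity)

lemma memLp_two_one_add_sq_rpow {s : ℝ} (hs : s < -1 / 4) :
    MemLp (fun x : ℝ => (1 + x ^ 2) ^ s) 2 volume := by
  rw [memLp_two_iff_integrable_sq (continuous_one_add_sq_rpow s).aestronglyMeasurable]
  have hint := integrable_rpow_neg_one_add_norm_sq (E := ℝ) (μ := volume) (r := -4 * s)
    (by rw [Module.finrank_self]; push_cast; linarith)
  refine hint.congr (Filter.Eventually.of_forall fun x => ?_)
  simp only [Real.norm_eq_abs, sq_abs]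
  rw [← Real.rpow_mul_natCast (by positivity)]
  ring_nf

lemma Polynomial.memLp_two_eval_mul_one_add_sq_rpow (p : ℝ[X]) {n : ℕ} (hp : p.natDegree ≤ n)
    {b : ℝ} (hb : n / 2 + b < -1 / 4) :
    MemLp (fun x : ℝ => p.eval x * (1 + x ^ 2) ^ b) 2 volume := by
  set M := ∑ i ∈ Finset.range (n + 1), |p.coeff i|
  refine ((memLp_two_one_add_sq_rpow hb).const_mul M).of_le ?_
    (Filter.Eventually.of_forall fun x => ?_)
  · exact (p.continuous.mul (continuous_one_add_sq_rpow b)).aestronglyMeasurable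
  have hpos : 0 < 1 + x ^ 2 := by positivity
  have hM : 0 ≤ M := Finset.sum_nonneg fun i _ => abs_nonneg _
  calc ‖p.eval x * (1 + x ^ 2) ^ b‖ = |p.eval x| * (1 + x ^ 2) ^ b := by
        rw [Real.norm_eq_abs, abs_mul, abs_of_pos (Real.rpow_pos_of_pos hpos b)]
    _ ≤ M * (1 + x ^ 2) ^ ((n : ℝ) / 2) * (1 + x ^ 2) ^ b := by
        gcongr; exact p.abs_eval_le_one_add_sq_rpow hp x
    _ = ‖M * (1 + x ^ 2) ^ ((n : ℝ) / 2 + b)‖ := by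
        rw [Real.rpow_add hpos, Real.norm_eq_abs, abs_of_nonneg (by positivity)]; ring

lemma hasDerivAt_eval_mul_one_add_sq_rpow (p : ℝ[X]) (b x : ℝ) :
    HasDerivAt (fun x : ℝ => p.eval x * (1 + x ^ 2) ^ b)
      ((derivative p * (1 + X ^ 2) + C (2 * b) * X * p).eval x * (1 + x ^ 2) ^ (b - 1)) x := by
  have hpos : 0 < 1 + x ^ 2 := by positivity
  have hsq : HasDerivAt (fun x : ℝ => 1 + x ^ 2) (2 * x) x := by
    simpa using (hasDerivAt_pow 2 x).const_add 1
  refine ((p.hasDerivAt x).mul (hsq.rpow_const (p := b) (Or.inl hpos.ne'))).congr_deriv ?_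
  have hsplit : (1 + x ^ 2) ^ b = (1 + x ^ 2) * (1 + x ^ 2) ^ (b - 1) := by
    rw [mul_comm, ← Real.rpow_add_one hpos.ne', sub_add_cancel]
  rw [hsplit]
  simp only [eval_add, eval_mul, eval_C, eval_one, eval_X, eval_pow]
  ring

lemma natDegree_derivative_mul_one_add_X_sq_add_le {R : Type*} [Semiring R] (p : R[X]) (c : R) :
    (derivative p * (1 + X ^ 2) + C c * X * p).natDegree ≤ p.natDegree + 1 := by
  refine (natDegree_add_le _ _).trans (max_le ?_ ?_)
  · rcases Nat.eq_zero_or_pos p.natDegree with h0 | hpos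
    · simp [derivative_of_natDegree_zero h0]
    · have h2 : (1 + X ^ 2 : R[X]).natDegree ≤ 2 := by compute_degree
      have := natDegree_derivative_le p
      exact natDegree_mul_le.trans (by omega)
  · have : (C c * X : R[X]).natDegree ≤ 1 := by compute_degree
    exact natDegree_mul_le.trans (by omega)

lemma exists_iteratedDeriv_one_add_sq_rpow_eq (a : ℝ) (k : ℕ) :
    ∃ p : ℝ[X], p.natDegree ≤ k ∧
      iteratedDeriv k (fun x : ℝ => (1 + x ^ 2) ^ a) =
        fun x => p.eval x * (1 + x ^ 2) ^ (a - k) := by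
  induction k with
  | zero => exact ⟨1, by simp, by ext; simp⟩
  | succ k ih =>
    obtain ⟨p, hdeg, hp⟩ := ih
    refine ⟨_, (natDegree_derivative_mul_one_add_X_sq_add_le p (2 * (a - k))).trans
      (by omega), ?_⟩
    ext x
    rw [iteratedDeriv_succ, hp, (hasDerivAt_eval_mul_one_add_sq_rpow p _ x).deriv]
    push_cast
    ring_nf

/-- Part of Lemma 3.7 of the paper: `g(x) = (1 + x²)^(-1/2)` is in `L²(ℝ)`, and
for all `k ≥ 1` and `0 ≤ l < k` the function `x ↦ xˡ · g⁽ᵏ⁾(x)` is in `L²(ℝ)`. -/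
theorem memL2_weighted_iteratedDeriv_one_add_sq_rpow_neg_half :
    MemLp (fun x : ℝ => (1 + x ^ 2) ^ (-(1 / 2 : ℝ))) 2 volume ∧
    ∀ k : ℕ, 1 ≤ k → ∀ l : ℕ, l < k →
      MemLp
        (fun x : ℝ =>
          x ^ l * iteratedDeriv k (fun y : ℝ => (1 + y ^ 2) ^ (-(1 / 2 : ℝ))) x)
        2 volume := by
  refine ⟨memLp_two_one_add_sq_rpow (by norm_num), fun k _ l hl => ?_⟩
  obtain ⟨p, hdeg, hp⟩ := exists_iteratedDeriv_one_add_sq_rpow_eq (-(1 / 2)) k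
  have hdeg' : (X ^ l * p).natDegree ≤ l + k :=
    natDegree_mul_le.trans (by rw [natDegree_X_pow]; omega)
  have hexp : ((l + k : ℕ) : ℝ) / 2 + (-(1 / 2) - k) < -1 / 4 := by
    have : (l : ℝ) + 1 ≤ k := by exact_mod_cast hl
    push_cast; linarith
  convert (X ^ l * p).memLp_two_eval_mul_one_add_sq_rpow hdeg' hexp using 2 with x
  rw [hp, eval_mul, eval_pow, eval_X, mul_assoc]
end

section
/- Let g : ℝ → ℝ be the function g(x) = x · (1 + x²)^(−1/2). For every ε > 0 there exists an integrable function h : ℝ → ℂ with compact support such that the inverse Fourier transform u := 𝓕⁻¹ h (a bounded continuous function on ℝ) satisfies |x| · |u(x) − (1 + x²)^(−1/2)| ≤ ε for all x ∈ ℝ; equivalently, |x · u(x) − g(x)| ≤ ε for all x ∈ ℝ. -/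
/-!
Subordination gives `(1 + x²)^(-1/2) = ∫₀^∞ s^(-1/2) e^{-π s (1 + x²)} ds`, and `e^{-π s x²}` is the
inverse Fourier transform of `s^(-1/2) e^{-π ξ² / s}`. Hence `(1 + x²)^(-1/2) = 𝓕⁻ φ` for the
integrable `φ(ξ) = ∫₀^∞ s⁻¹ e^{-π (s + ξ² / s)} ds` (this is `2 K₀(2π|ξ|)`).

Cut `φ` off as `h = φ · (𝓕 J)(c ·)`, where `J` is a Schwartz function with `∫ J = 1` whose Fourier
transform is a compactly supported bump. Then `𝓕⁻ h x = ∫ J(u) (1 + (x - c u)²)^(-1/2) du`. Since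
`x (1 + x²)^(-1/2) = sin (arctan x)` is `1`-Lipschitz and `(1 + x²)^(-1/2) ≤ 1`, moving the argument
by `y` changes `x (1 + (x - y)²)^(-1/2)` by at most `2 |y|`, so the error in the theorem is at most
`2 c ∫ |u| ‖J u‖ du`, which is small for small `c`.
-/

open MeasureTheory Real Complex Set
open scoped FourierTransform SchwartzMap

section Fourier

variable {V F α : Type*} [NormedAddCommGroup V] [InnerProductSpace ℝ V] [FiniteDimensional ℝ V]
  [MeasurableSpace V] [BorelSpace V] [NormedAddCommGroup F] [NormedSpace ℂ F]
  [MeasurableSpace α] {μ : Measure α} [SFinite μ]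

theorem Real.fourierInv_integral_comm {G : α → V → F}
    (hG : Integrable (Function.uncurry G) (μ.prod volume)) (x : V) :
    𝓕⁻ (fun ξ ↦ ∫ s, G s ξ ∂μ) x = ∫ s, 𝓕⁻ (G s) x ∂μ := by
  simp_rw [Real.fourierInv_eq, Circle.smul_def, ← integral_smul]
  have he : Continuous fun ξ : V ↦ (𝐞 (inner ℝ ξ x) : ℂ) := by fun_prop
  refine integral_integral_swap ((hG.swap.norm).mono' ?_ ?_)
  · exact (he.measurable.comp measurable_fst).aestronglyMeasurable.smul
      hG.swap.aestronglyMeasurable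
  · filter_upwards with ⟨ξ, s⟩ using by simp [norm_smul, Circle.norm_coe]

theorem Real.fourierInv_mul_fourier_comp_smul {φ J : V → ℂ} (hφ : Integrable φ)
    (hJ : Integrable J) (c : ℝ) (x : V) :
    𝓕⁻ (fun ξ ↦ φ ξ * 𝓕 J (c • ξ)) x = ∫ u, J u * 𝓕⁻ φ (x - c • u) := by
  set G : V → V → ℂ := fun u ξ ↦ 𝐞 (-inner ℝ (c • u) ξ) * (J u * φ ξ)
  have hG : Integrable (Function.uncurry G) (volume.prod volume) := by
    refine (hJ.mul_prod hφ).bdd_mul (c := 1) ?_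
      (.of_forall fun _ ↦ by simp [Circle.norm_coe])
    exact (show Continuous fun p : V × V ↦ (𝐞 (-inner ℝ (c • p.1) p.2) : ℂ) by fun_prop)
      |>.aestronglyMeasurable
  have hrep : (fun ξ ↦ φ ξ * 𝓕 J (c • ξ)) = fun ξ ↦ ∫ u, G u ξ := by
    ext ξ
    simp_rw [G, Real.fourier_eq, Circle.smul_def, smul_eq_mul, ← integral_const_mul,
      real_inner_smul_left, real_inner_smul_right]
    congr with u
    ring
  rw [hrep, Real.fourierInv_integral_comm hG]
  congr with u
  simp_rw [G, Real.fourierInv_eq, Circle.smul_def, smul_eq_mul, ← integral_const_mul]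
  congr with ξ
  rw [inner_sub_right, sub_eq_add_neg, AddChar.map_add_eq_mul, Circle.coe_mul,
    real_inner_comm ξ (c • u)]
  ring

end Fourier

theorem SchwartzMap.exists_integral_eq_one_hasCompactSupport_fourier (V : Type*)
    [NormedAddCommGroup V] [InnerProductSpace ℝ V] [FiniteDimensional ℝ V] [MeasurableSpace V]
    [BorelSpace V] :
    ∃ J : 𝓢(V, ℂ), ∫ v, J v = 1 ∧ HasCompactSupport ⇑(𝓕 J : 𝓢(V, ℂ)) := by
  let b : ContDiffBump (0 : V) := ⟨1, 2, one_pos, one_lt_two⟩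
  have hb : HasCompactSupport fun v ↦ (b v : ℂ) := b.hasCompactSupport.comp_left ofReal_zero
  set ψ : 𝓢(V, ℂ) := hb.toSchwartzMap (ofRealCLM.contDiff.comp b.contDiff)
  set J : 𝓢(V, ℂ) := 𝓕⁻ ψ
  have hJ : 𝓕 J = ψ := FourierInvPair.fourier_fourierInv_eq ψ
  refine ⟨J, ?_, by rw [hJ]; exact hb⟩
  have hψ0 : ψ 0 = 1 := by
    change ((b 0 : ℝ) : ℂ) = 1
    rw [b.one_of_mem_closedBall (Metric.mem_closedBall_self zero_le_one), ofReal_one]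
  calc ∫ v, J v = 𝓕 (J : V → ℂ) 0 := by simp [Real.fourier_eq]
    _ = 1 := by rw [← SchwartzMap.fourier_coe, hJ, hψ0]

theorem norm_integral_smul_sub_le {E G : Type*} [NormedAddCommGroup E] [MeasurableSpace E]
    {μ : Measure E} [NormedAddCommGroup G] [NormedSpace ℂ G] [CompleteSpace G]
    {K : E → ℂ} (hK : Integrable K μ) (hK_moment : Integrable (fun y ↦ ‖y‖ * ‖K y‖) μ)
    (hK_one : ∫ y, K y ∂μ = 1) {F : E → G} (hF : AEStronglyMeasurable F μ) {L : ℝ}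
    (hFL : ∀ y, ‖F y - F 0‖ ≤ L * ‖y‖) :
    ‖∫ y, K y • F y ∂μ - F 0‖ ≤ L * ∫ y, ‖y‖ * ‖K y‖ ∂μ := by
  have hbound (y : E) : ‖K y • (F y - F 0)‖ ≤ L * (‖y‖ * ‖K y‖) :=
    calc ‖K y • (F y - F 0)‖ ≤ ‖K y‖ * (L * ‖y‖) := by
          rw [norm_smul]; exact mul_le_mul_of_nonneg_left (hFL y) (norm_nonneg _)
      _ = L * (‖y‖ * ‖K y‖) := by ring
  have hint : Integrable (fun y ↦ K y • (F y - F 0)) μ :=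
    (hK_moment.const_mul L).mono' (hK.1.smul (hF.sub aestronglyMeasurable_const))
      (.of_forall hbound)
  have hsplit : ∫ y, K y • F y ∂μ = ∫ y, K y • (F y - F 0) ∂μ + F 0 :=
    calc ∫ y, K y • F y ∂μ = ∫ y, (K y • (F y - F 0) + K y • F 0) ∂μ := by
          simp_rw [← smul_add, sub_add_cancel]
      _ = _ := by rw [integral_add hint (hK.smul_const _), integral_smul_const, hK_one, one_smul]
  rw [hsplit, add_sub_cancel_right, ← integral_const_mul]
  exact norm_integral_le_of_norm_le (hK_moment.const_mul L) (.of_forall hbound)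

theorem fourierInv_gaussian_pi_inv {s : ℝ} (hs : 0 < s) (x : ℝ) :
    𝓕⁻ (fun ξ : ℝ ↦ cexp (-π * (s : ℂ)⁻¹ * ξ ^ 2)) x =
      ((s ^ (1 / 2 : ℝ) : ℝ) : ℂ) * cexp (-π * s * x ^ 2) := by
  have hb : 0 < ((s : ℂ)⁻¹).re := by simpa using hs
  have hpow : ((s : ℂ)⁻¹) ^ (1 / 2 : ℂ) = (((s ^ (1 / 2 : ℝ))⁻¹ : ℝ) : ℂ) := by
    rw [← inv_rpow hs.le, ← ofReal_inv, ofReal_cpow (inv_nonneg.2 hs.le)]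
    norm_num
  rw [Real.fourierInv_eq_fourier_neg, fourier_gaussian_pi hb, hpow]
  simp [div_eq_mul_inv]

theorem integral_rpow_neg_half_mul_exp_neg_mul {r : ℝ} (hr : 0 < r) :
    ∫ s in Ioi (0 : ℝ), s ^ (-(1 / 2 : ℝ)) * rexp (-(π * r * s)) = r ^ (-(1 / 2 : ℝ)) := by
  have h := integral_rpow_mul_exp_neg_mul_Ioi (by norm_num : (0 : ℝ) < 1 / 2)
    (by positivity : 0 < π * r)
  rw [show (1 / 2 : ℝ) - 1 = -(1 / 2) by norm_num, Real.Gamma_one_half_eq] at h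
  rw [h, one_div, inv_rpow (by positivity), mul_rpow pi_pos.le hr.le, sqrt_eq_rpow,
    rpow_neg hr.le]
  have : π ^ (1 / 2 : ℝ) ≠ 0 := by positivity
  field_simp

noncomputable def subordinationKernel (s ξ : ℝ) : ℂ :=
  ((s⁻¹ * rexp (-(π * s)) : ℝ) : ℂ) * cexp (-π * (s : ℂ)⁻¹ * ξ ^ 2)

theorem fourierInv_subordinationKernel {s : ℝ} (hs : 0 < s) (x : ℝ) :
    𝓕⁻ (subordinationKernel s) x =
      ((s ^ (-(1 / 2 : ℝ)) * rexp (-(π * (1 + x ^ 2) * s)) : ℝ) : ℂ) := by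
  have h := fourierInv_gaussian_pi_inv hs x
  have hreal : s ^ (-(1 / 2 : ℝ)) * rexp (-(π * (1 + x ^ 2) * s)) =
      s⁻¹ * rexp (-(π * s)) * (s ^ (1 / 2 : ℝ) * rexp (-π * s * x ^ 2)) := by
    rw [show -(1 / 2 : ℝ) = -1 + 1 / 2 by norm_num, rpow_add hs, rpow_neg_one,
      show -(π * (1 + x ^ 2) * s) = -(π * s) + -π * s * x ^ 2 by ring, Real.exp_add]
    ring
  rw [Real.fourierInv_eq'] at h ⊢
  simp_rw [subordinationKernel, smul_eq_mul, mul_left_comm _ ((_ : ℝ) : ℂ)] at h ⊢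
  rw [integral_const_mul, h, hreal]
  push_cast
  ring

theorem norm_subordinationKernel {s : ℝ} (hs : 0 < s) (ξ : ℝ) :
    ‖subordinationKernel s ξ‖ = s⁻¹ * rexp (-(π * s)) * rexp (-(π / s) * ξ ^ 2) := by
  rw [subordinationKernel, norm_mul, norm_real, Real.norm_of_nonneg (by positivity),
    show -π * (s : ℂ)⁻¹ * ξ ^ 2 = ((-(π / s) * ξ ^ 2 : ℝ) : ℂ) by push_cast; ring,
    Complex.norm_exp_ofReal]

theorem integrable_subordinationKernel :
    Integrable (Function.uncurry subordinationKernel) ((volume.restrict (Ioi 0)).prod volume) := by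
  have hmeas : Measurable (Function.uncurry subordinationKernel) := by
    unfold subordinationKernel Function.uncurry; fun_prop
  rw [integrable_prod_iff hmeas.aestronglyMeasurable]
  constructor
  · filter_upwards [ae_restrict_mem measurableSet_Ioi] with s (hs : 0 < s)
    simp only [Function.uncurry_apply_pair, subordinationKernel]
    refine Integrable.const_mul (f := fun ξ : ℝ ↦ cexp (-π * (s : ℂ)⁻¹ * ξ ^ 2)) ?_ _
    simpa only [neg_mul] using
      integrable_cexp_neg_mul_sq (b := π * (s : ℂ)⁻¹) (by simpa using by positivity)
  · refine (integrableOn_rpow_mul_exp_neg_mul_rpow (s := -(1 / 2)) (p := 1) (by norm_num)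
      one_pos pi_pos).congr_fun (fun s (hs : 0 < s) ↦ ?_) measurableSet_Ioi
    simp only [Function.uncurry_apply_pair, norm_subordinationKernel hs, integral_const_mul,
      integral_gaussian, rpow_one]
    rw [div_div_cancel₀ pi_ne_zero, sqrt_eq_rpow, show -(1 / 2 : ℝ) = -1 + 1 / 2 by norm_num,
      rpow_add hs, rpow_neg_one, neg_mul]
    ring

theorem exists_integrable_fourierInv_eq_rpow_neg_half :
    ∃ φ : ℝ → ℂ, Integrable φ ∧ ∀ x : ℝ, 𝓕⁻ φ x = (((1 + x ^ 2) ^ (-(1 / 2 : ℝ)) : ℝ) : ℂ) := by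
  refine ⟨fun ξ ↦ ∫ s in Ioi 0, subordinationKernel s ξ,
    integrable_subordinationKernel.integral_prod_right, fun x ↦ ?_⟩
  rw [Real.fourierInv_integral_comm integrable_subordinationKernel,
    setIntegral_congr_fun measurableSet_Ioi fun s hs ↦ fourierInv_subordinationKernel hs x,
    integral_complex_ofReal, integral_rpow_neg_half_mul_exp_neg_mul (by positivity)]

theorem Real.lipschitzWith_arctan : LipschitzWith 1 arctan :=
  lipschitzWith_of_nnnorm_deriv_le differentiable_arctan fun x ↦ by
    rw [← NNReal.coe_le_coe, coe_nnnorm, deriv_arctan, norm_div, norm_one, NNReal.coe_one,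
      Real.norm_of_nonneg (by positivity)]
    exact div_le_one_of_le₀ (by nlinarith [sq_nonneg x]) (by positivity)

theorem Real.cos_arctan_eq_rpow (x : ℝ) : cos (arctan x) = (1 + x ^ 2) ^ (-(1 / 2 : ℝ)) := by
  rw [cos_arctan, sqrt_eq_rpow, rpow_neg (by positivity), one_div]

theorem abs_mul_rpow_neg_half_sub_le (x y : ℝ) :
    |x * (1 + (x - y) ^ 2) ^ (-(1 / 2 : ℝ)) - x * (1 + x ^ 2) ^ (-(1 / 2 : ℝ))| ≤ 2 * |y| := by
  have hsin (z : ℝ) : z * cos (arctan z) = sin (arctan z) := by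
    rw [sin_arctan, cos_arctan, mul_one_div]
  have hsplit : x * cos (arctan (x - y)) - x * cos (arctan x) =
      (sin (arctan (x - y)) - sin (arctan x)) + y * cos (arctan (x - y)) := by
    rw [← hsin, ← hsin]; ring
  have hlip : |sin (arctan (x - y)) - sin (arctan x)| ≤ |y| := by
    simpa [← Real.dist_eq] using
      (lipschitzWith_sin.comp lipschitzWith_arctan).dist_le_mul (x - y) x
  simp only [← cos_arctan_eq_rpow]
  rw [hsplit]
  calc _ ≤ |sin (arctan (x - y)) - sin (arctan x)| + |y| * |cos (arctan (x - y))| :=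
        (abs_add_le _ _).trans_eq (by rw [abs_mul])
    _ ≤ |y| + |y| * 1 := by gcongr; exact abs_cos_le_one _
    _ = 2 * |y| := by ring

theorem abs_mul_norm_fourierInv_sub_le {φ J : ℝ → ℂ} (hφ : Integrable φ)
    (hφ_inv : ∀ x : ℝ, 𝓕⁻ φ x = (((1 + x ^ 2) ^ (-(1 / 2 : ℝ)) : ℝ) : ℂ)) (hJ : Integrable J)
    (hJ_moment : Integrable fun u : ℝ ↦ ‖u‖ * ‖J u‖) (hJ_one : ∫ u, J u = 1) {c : ℝ}
    (hc : 0 ≤ c) (x : ℝ) :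
    |x| * ‖𝓕⁻ (fun ξ ↦ φ ξ * 𝓕 J (c • ξ)) x - (((1 + x ^ 2) ^ (-(1 / 2 : ℝ)) : ℝ) : ℂ)‖ ≤
      2 * c * ∫ u, ‖u‖ * ‖J u‖ := by
  rw [Real.fourierInv_mul_fourier_comp_smul hφ hJ c x]
  simp_rw [hφ_inv, smul_eq_mul]
  set F : ℝ → ℂ := fun u ↦ ((x * (1 + (x - c * u) ^ 2) ^ (-(1 / 2 : ℝ)) : ℝ) : ℂ)
  have hF : AEStronglyMeasurable F := (by fun_prop : Measurable F).aestronglyMeasurable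
  have hFL (u : ℝ) : ‖F u - F 0‖ ≤ 2 * c * ‖u‖ :=
    calc ‖F u - F 0‖ = |x * (1 + (x - c * u) ^ 2) ^ (-(1 / 2 : ℝ)) -
          x * (1 + x ^ 2) ^ (-(1 / 2 : ℝ))| := by
          simp only [F, mul_zero, sub_zero, ← ofReal_sub, norm_real, Real.norm_eq_abs]
      _ ≤ 2 * |c * u| := abs_mul_rpow_neg_half_sub_le x (c * u)
      _ = 2 * c * ‖u‖ := by rw [abs_mul, abs_of_nonneg hc, Real.norm_eq_abs, mul_assoc]
  calc _ = ‖(∫ u, J u • F u) - F 0‖ := by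
        simp only [F, smul_eq_mul, mul_zero, sub_zero, ofReal_mul, mul_left_comm _ (x : ℂ),
          integral_const_mul, ← mul_sub, norm_mul, norm_real, Real.norm_eq_abs]
    _ ≤ _ := norm_integral_smul_sub_le hJ hJ_moment hJ_one hF hFL

/-- Key construction in Lemma 3.6(c) of the paper: for every `ε > 0` there is a
compactly supported integrable function `h : ℝ → ℂ` whose inverse Fourier
transform `u = 𝓕⁻ h` approximates `(1 + x²)^(-1/2)` uniformly after
multiplication by `x`:  `|x| · |u(x) - (1 + x²)^(-1/2)| ≤ ε` for all `x`. -/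
theorem approx_normalizing_function_by_band_limited :
    ∀ ε > (0 : ℝ), ∃ h : ℝ → ℂ,
      Integrable h ∧ HasCompactSupport h ∧
      ∀ x : ℝ,
        |x| * ‖𝓕⁻ h x - (((1 + x ^ 2) ^ (-(1 / 2 : ℝ)) : ℝ) : ℂ)‖ ≤ ε := by
  intro ε hε
  obtain ⟨φ, hφ, hφ_inv⟩ := exists_integrable_fourierInv_eq_rpow_neg_half
  obtain ⟨J, hJ_one, hJ_supp⟩ := SchwartzMap.exists_integral_eq_one_hasCompactSupport_fourier ℝ
  set m := ∫ u : ℝ, ‖u‖ * ‖J u‖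
  have hm : 0 ≤ m := integral_nonneg fun _ ↦ by positivity
  set c := ε / (2 * m + 1)
  have hc : 0 < c := by positivity
  obtain ⟨C, hC⟩ := (𝓕 J).continuous.bounded_above_of_compact_support hJ_supp
  refine ⟨fun ξ ↦ φ ξ * 𝓕 J (c • ξ), ?_, (hJ_supp.comp_smul hc.ne').mul_left, fun x ↦ ?_⟩
  · exact hφ.mul_bdd ((𝓕 J).continuous.comp (continuous_const_smul c)).aestronglyMeasurable
      (.of_forall fun _ ↦ hC _)
  calc _ ≤ 2 * c * m := by
        rw [SchwartzMap.fourier_coe]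
        exact abs_mul_norm_fourierInv_sub_le hφ hφ_inv J.integrable
          (by simpa using J.integrable_pow_mul volume 1) hJ_one hc.le x
    _ ≤ ε := by
        rw [mul_comm 2 c, mul_assoc, div_mul_eq_mul_div, div_le_iff₀ (by positivity)]
        nlinarith
end
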